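/- For any d×d density matrices ρ and σ, S(ρ + I ‖ σ + I) ≤ log 2. -/

import Mathlib

open Matrix MeasureTheory
open scoped ComplexOrder

/-!
Write `A = ρ + 1`, `B = σ + 1` with eigenvalues `aᵢ`, `bⱼ` and orthonormal eigenbases `uᵢ`, `vⱼ`.
Then `S(A‖B) = ∑ᵢⱼ |⟪uᵢ, vⱼ⟫|² (aᵢ log aᵢ - aᵢ log bⱼ)`, and the weights `|⟪uᵢ, vⱼ⟫|²` form a
doubly stochastic matrix. Every eigenvalue is at least `1` and they sum to `d + 1`, so all lie in
`[1, 2]`, where convexity of `x log x` and concavity of `log` give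
`x log x - x log y ≤ log 2 (2x - y - 1)`. Averaging against the weights bounds `S(A‖B)` by
`log 2 (2(d + 1) - (d + 1) - d) = log 2`.
-/

/-- Matrix logarithm on the support: apply `Real.log` (which is `0` at `0`) to the
eigenvalues of a Hermitian matrix via functional calculus; junk value `0` otherwise. -/
noncomputable def mlog {n : Type*} [Fintype n] [DecidableEq n] (A : Matrix n n ℂ) :
    Matrix n n ℂ :=
  if hA : A.IsHermitian then hA.cfc Real.log else 0

/-- Quantum relative entropy `S(A‖B) = Tr A (log A - log B)`. -/
noncomputable def qRelEnt {n : Type*} [Fintype n] [DecidableEq n] (A B : Matrix n n ℂ) : ℝ :=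
  ((A * (mlog A - mlog B)).trace).re

/-- The square root of a positive semidefinite matrix (as in the older Mathlib). -/
noncomputable def Matrix.PosSemidef.sqrt {n : Type*} [Fintype n] [DecidableEq n] {A : Matrix n n ℂ}
    (hA : A.PosSemidef) : Matrix n n ℂ :=
  hA.1.eigenvectorUnitary.1 * diagonal ((↑) ∘ (√·) ∘ hA.1.eigenvalues) *
  (star hA.1.eigenvectorUnitary : Matrix n n ℂ)

theorem Matrix.PosSemidef.posSemidef_sqrt {n : Type*} [Fintype n] [DecidableEq n]
    {A : Matrix n n ℂ} (hA : A.PosSemidef) : PosSemidef hA.sqrt := by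
  unfold Matrix.PosSemidef.sqrt
  refine (PosSemidef.diagonal (fun i => ?_)).mul_mul_conjTranspose_same _
  simp only [Function.comp_apply, Pi.zero_apply, Complex.zero_le_real]
  exact Real.sqrt_nonneg _

/-- Trace norm `‖X‖₁ = Tr √(Xᴴ X)`. -/
noncomputable def traceNorm {n : Type*} [Fintype n] [DecidableEq n] (X : Matrix n n ℂ) : ℝ :=
  ((Matrix.posSemidef_conjTranspose_mul_self X).sqrt.trace).re

/-- Smallest eigenvalue of a Hermitian matrix (junk value `0` otherwise). -/
noncomputable def lamMin {n : Type*} [Fintype n] [DecidableEq n] (A : Matrix n n ℂ) : ℝ :=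
  if hA : A.IsHermitian then ⨅ i, hA.eigenvalues i else 0

/-- Largest eigenvalue of a Hermitian matrix (junk value `0` otherwise). -/
noncomputable def lamMax {n : Type*} [Fintype n] [DecidableEq n] (A : Matrix n n ℂ) : ℝ :=
  if hA : A.IsHermitian then ⨆ i, hA.eigenvalues i else 0

/-- Operator norm: largest eigenvalue of `√(Xᴴ X)` (largest singular value). -/
noncomputable def opNorm {n : Type*} [Fintype n] [DecidableEq n] (X : Matrix n n ℂ) : ℝ :=
  ⨆ i, (Matrix.posSemidef_conjTranspose_mul_self X).posSemidef_sqrt.1.eigenvalues i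

namespace Matrix

variable {𝕜 n : Type*} [RCLike 𝕜] [Fintype n] [DecidableEq n]

theorem sum_norm_sq_apply_eq_one_of_mem_unitaryGroup {U : Matrix n n 𝕜}
    (hU : U ∈ unitaryGroup n 𝕜) (i : n) : ∑ j, ‖U i j‖ ^ 2 = 1 := by
  have h := congr_fun₂ (mem_unitaryGroup_iff.mp hU) i i
  simp only [mul_apply, star_apply, RCLike.star_def, RCLike.mul_conj, one_apply_eq] at h
  exact_mod_cast h

theorem sum_norm_sq_apply_eq_one_of_mem_unitaryGroup' {U : Matrix n n 𝕜}
    (hU : U ∈ unitaryGroup n 𝕜) (j : n) : ∑ i, ‖U i j‖ ^ 2 = 1 := by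
  simpa using sum_norm_sq_apply_eq_one_of_mem_unitaryGroup (Unitary.star_mem hU) j

theorem re_trace_diagonal_mul_mul_diagonal_mul_star (a b : n → ℝ) (W : Matrix n n 𝕜) :
    RCLike.re (diagonal (RCLike.ofReal ∘ a) * W * diagonal (RCLike.ofReal ∘ b) * star W).trace =
      ∑ i, ∑ j, ‖W i j‖ ^ 2 * (a i * b j) := by
  simp only [trace, diag, mul_apply, diagonal_apply, Function.comp_apply, ite_mul, mul_ite,
    zero_mul, mul_zero, Finset.sum_ite_eq, Finset.sum_ite_eq', Finset.mem_univ, ↓reduceIte,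
    star_apply, map_sum]
  refine Finset.sum_congr rfl fun i _ => Finset.sum_congr rfl fun j _ => ?_
  rw [RCLike.norm_sq_eq_def]
  simp only [RCLike.star_def, RCLike.mul_re, RCLike.ofReal_re, RCLike.ofReal_im, RCLike.mul_im,
    RCLike.conj_re, RCLike.conj_im]
  ring

namespace IsHermitian

variable {A B : Matrix n n 𝕜} (hA : A.IsHermitian) (hB : B.IsHermitian)

/-- `overlap hA hB i j = |⟪uᵢ, vⱼ⟫|²` for the eigenbases `u` of `A` and `v` of `B`. -/
noncomputable def overlap (i j : n) : ℝ :=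
  ‖(star (hA.eigenvectorUnitary : Matrix n n 𝕜) * hB.eigenvectorUnitary) i j‖ ^ 2

theorem overlap_nonneg (i j : n) : 0 ≤ overlap hA hB i j := by
  unfold overlap
  positivity

theorem sum_overlap_right (i : n) : ∑ j, overlap hA hB i j = 1 :=
  sum_norm_sq_apply_eq_one_of_mem_unitaryGroup
    (star hA.eigenvectorUnitary * hB.eigenvectorUnitary).2 i

theorem sum_overlap_left (j : n) : ∑ i, overlap hA hB i j = 1 :=
  sum_norm_sq_apply_eq_one_of_mem_unitaryGroup'
    (star hA.eigenvectorUnitary * hB.eigenvectorUnitary).2 j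

theorem sum_sum_overlap_mul_add (f g : n → ℝ) :
    ∑ i, ∑ j, overlap hA hB i j * (f i + g j) = ∑ i, f i + ∑ j, g j := by
  simp only [mul_add, Finset.sum_add_distrib]
  rw [Finset.sum_comm (f := fun i j => overlap hA hB i j * g j)]
  simp only [← Finset.sum_mul, sum_overlap_right, sum_overlap_left, one_mul]

theorem re_trace_cfc (f : ℝ → ℝ) : RCLike.re (hA.cfc f).trace = ∑ i, f (hA.eigenvalues i) := by
  rw [IsHermitian.cfc, Unitary.conjStarAlgAut_apply, trace_mul_cycle, Unitary.coe_star_mul_self,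
    one_mul, trace_diagonal, map_sum]
  simp

theorem re_trace_cfc_mul_cfc (f g : ℝ → ℝ) :
    RCLike.re (hA.cfc f * hB.cfc g).trace =
      ∑ i, ∑ j, overlap hA hB i j * (f (hA.eigenvalues i) * g (hB.eigenvalues j)) := by
  set U := (hA.eigenvectorUnitary : Matrix n n 𝕜)
  set V := (hB.eigenvectorUnitary : Matrix n n 𝕜)
  have hcyc : (U * diagonal (RCLike.ofReal ∘ f ∘ hA.eigenvalues) * star U *
      (V * diagonal (RCLike.ofReal ∘ g ∘ hB.eigenvalues) * star V)).trace =
      (diagonal (RCLike.ofReal ∘ f ∘ hA.eigenvalues) * (star U * V) *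
        diagonal (RCLike.ofReal ∘ g ∘ hB.eigenvalues) * star (star U * V)).trace := by
    simp only [Matrix.mul_assoc]
    rw [trace_mul_comm]
    simp only [Matrix.mul_assoc, star_mul, star_star]
  rw [IsHermitian.cfc, IsHermitian.cfc, Unitary.conjStarAlgAut_apply, Unitary.conjStarAlgAut_apply,
    hcyc]
  exact re_trace_diagonal_mul_mul_diagonal_mul_star (f ∘ hA.eigenvalues) (g ∘ hB.eigenvalues) _

theorem mul_cfc (f : ℝ → ℝ) : A * hA.cfc f = hA.cfc (fun x => x * f x) := by
  rw [← hA.cfc_eq, ← hA.cfc_eq,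
    cfc_mul (fun x => x) f A (hg := A.finite_real_spectrum.continuousOn f), cfc_id' ℝ A]

theorem cfc_id : hA.cfc id = A := by
  rw [← hA.cfc_eq, _root_.cfc_id ℝ A]

end IsHermitian

variable {ρ : Matrix n n 𝕜}

theorem IsHermitian.sum_eigenvalues_add_one (h : (ρ + 1).IsHermitian) :
    ∑ i, h.eigenvalues i = RCLike.re ρ.trace + Fintype.card n := by
  have := congrArg RCLike.re h.trace_eq_sum_eigenvalues
  simpa [trace_add, map_sum] using this.symm

theorem PosSemidef.one_le_eigenvalues_add_one (hρ : ρ.PosSemidef) (h : (ρ + 1).IsHermitian)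
    (i : n) : 1 ≤ h.eigenvalues i := by
  rw [h.eigenvalues_eq, add_mulVec, one_mulVec, dotProduct_add, map_add]
  have hunit : star ⇑(h.eigenvectorBasis i) ⬝ᵥ ⇑(h.eigenvectorBasis i) = 1 := by
    rw [dotProduct_comm, ← EuclideanSpace.inner_eq_star_dotProduct, inner_self_eq_norm_sq_to_K,
      h.eigenvectorBasis.orthonormal.1 i]
    simp
  rw [hunit, RCLike.one_re]
  linarith [hρ.re_dotProduct_nonneg (h.eigenvectorBasis i)]

theorem PosSemidef.eigenvalues_add_one_mem_Icc (hρ : ρ.PosSemidef) (hρ1 : ρ.trace = 1)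
    (h : (ρ + 1).IsHermitian) (i : n) : h.eigenvalues i ∈ Set.Icc 1 2 := by
  have hsum : ∑ j, (h.eigenvalues j - 1) = 1 := by
    rw [Finset.sum_sub_distrib, h.sum_eigenvalues_add_one, hρ1]
    simp
  have hle : h.eigenvalues i - 1 ≤ ∑ j, (h.eigenvalues j - 1) :=
    Finset.single_le_sum (fun j _ => sub_nonneg.2 (hρ.one_le_eigenvalues_add_one h j))
      (Finset.mem_univ i)
  exact ⟨hρ.one_le_eigenvalues_add_one h i, by linarith⟩

end Matrix

namespace Real

theorem mul_log_le_of_mem_Icc_one_two {x : ℝ} (hx : x ∈ Set.Icc 1 2) :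
    x * log x ≤ 2 * (x - 1) * log 2 := by
  have h := convexOn_mul_log.2 (Set.mem_Ici.2 zero_le_one) (Set.mem_Ici.2 zero_le_two)
    (sub_nonneg.2 hx.2) (sub_nonneg.2 hx.1) (by ring)
  simp only [smul_eq_mul, log_one] at h
  rw [show (2 - x) * 1 + (x - 1) * 2 = x by ring] at h
  linarith

theorem sub_one_mul_log_two_le_log {y : ℝ} (hy : y ∈ Set.Icc 1 2) : (y - 1) * log 2 ≤ log y := by
  have h := strictConcaveOn_log_Ioi.concaveOn.2 (Set.mem_Ioi.2 one_pos) (Set.mem_Ioi.2 two_pos)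
    (sub_nonneg.2 hy.2) (sub_nonneg.2 hy.1) (by ring)
  simp only [smul_eq_mul, log_one] at h
  rw [show (2 - y) * 1 + (y - 1) * 2 = y by ring] at h
  linarith

theorem mul_log_sub_mul_log_le {x y : ℝ} (hx : x ∈ Set.Icc 1 2) (hy : y ∈ Set.Icc 1 2) :
    x * log x - x * log y ≤ log 2 * (2 * x - y - 1) := by
  have hlog : log y ≤ x * log y := le_mul_of_one_le_left (log_nonneg hy.1) hx.1
  linarith [mul_log_le_of_mem_Icc_one_two hx, sub_one_mul_log_two_le_log hy]

end Real

section RelativeEntropy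

open Real

variable {n : Type*} [Fintype n] [DecidableEq n] {A B : Matrix n n ℂ}

theorem qRelEnt_eq_sum_overlap (hA : A.IsHermitian) (hB : B.IsHermitian) :
    qRelEnt A B = ∑ i, ∑ j, hA.overlap hB i j * (hA.eigenvalues i * log (hA.eigenvalues i) -
      hA.eigenvalues i * log (hB.eigenvalues j)) := by
  have hlogA : mlog A = hA.cfc log := dif_pos hA
  have hlogB : mlog B = hB.cfc log := dif_pos hB
  have hself : (A * hA.cfc log).trace.re =
      ∑ i, ∑ j, hA.overlap hB i j * (hA.eigenvalues i * log (hA.eigenvalues i)) := by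
    rw [hA.mul_cfc, ← RCLike.re_to_complex, hA.re_trace_cfc]
    simp only [← Finset.sum_mul, hA.sum_overlap_right, one_mul]
  have hcross : (A * hB.cfc log).trace.re =
      ∑ i, ∑ j, hA.overlap hB i j * (hA.eigenvalues i * log (hB.eigenvalues j)) := by
    simpa only [hA.cfc_id, id, RCLike.re_to_complex] using hA.re_trace_cfc_mul_cfc hB id log
  simp only [qRelEnt, hlogA, hlogB, trace_sub, Complex.sub_re, hself, hcross,
    ← Finset.sum_sub_distrib, mul_sub]

theorem qRelEnt_le_of_eigenvalues_mem_Icc (hA : A.IsHermitian) (hB : B.IsHermitian)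
    (ha : ∀ i, hA.eigenvalues i ∈ Set.Icc 1 2) (hb : ∀ j, hB.eigenvalues j ∈ Set.Icc 1 2) :
    qRelEnt A B ≤
      log 2 * (2 * ∑ i, hA.eigenvalues i - ∑ j, hB.eigenvalues j - Fintype.card n) := by
  calc qRelEnt A B
      ≤ ∑ i, ∑ j, hA.overlap hB i j *
          (log 2 * (2 * hA.eigenvalues i - 1) + -(log 2 * hB.eigenvalues j)) := by
        rw [qRelEnt_eq_sum_overlap]
        gcongr with i _ j _
        · exact hA.overlap_nonneg hB i j
        · exact (mul_log_sub_mul_log_le (ha i) (hb j)).trans_eq (by ring)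
    _ = _ := by
        rw [hA.sum_sum_overlap_mul_add]
        simp only [← Finset.mul_sum, Finset.sum_neg_distrib, Finset.sum_sub_distrib,
          Finset.sum_const, Finset.card_univ, nsmul_eq_mul, mul_one]
        ring

end RelativeEntropy

/-- The regularised relative entropy (before normalisation) is at most `log 2`. -/
theorem regRelEntropy_le_log_two {d : ℕ} (ρ σ : Matrix (Fin d) (Fin d) ℂ)
    (hρ : ρ.PosSemidef) (hρ1 : ρ.trace = 1)
    (hσ : σ.PosSemidef) (hσ1 : σ.trace = 1) :
    qRelEnt (ρ + 1) (σ + 1) ≤ Real.log 2 := by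
  have hA : (ρ + 1).IsHermitian := hρ.1.add isHermitian_one
  have hB : (σ + 1).IsHermitian := hσ.1.add isHermitian_one
  calc qRelEnt (ρ + 1) (σ + 1)
      ≤ Real.log 2 *
          (2 * ∑ i, hA.eigenvalues i - ∑ j, hB.eigenvalues j - Fintype.card (Fin d)) :=
        qRelEnt_le_of_eigenvalues_mem_Icc hA hB (hρ.eigenvalues_add_one_mem_Icc hρ1 hA)
          (hσ.eigenvalues_add_one_mem_Icc hσ1 hB)
    _ = Real.log 2 := by
        rw [hA.sum_eigenvalues_add_one, hB.sum_eigenvalues_add_one, hρ1, hσ1, Fintype.card_fin]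
        simp only [RCLike.one_re]
        ring
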